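/- arXiv:1707.09968 — 4 statements merged into one kernel-verified Lean document; each statement's English description precedes it below -/
import Mathlib

section
/- For the path graph P_n on n vertices, the burning number satisfies b(P_n) = ⌈√n⌉. -/
open SimpleGraph

/-- The closed ball of radius `r` around `v` in the graph metric
(restricted to the connected component of `v`). -/
def SimpleGraph.nball {V : Type*} (G : SimpleGraph V) (v : V) (r : ℕ) : Set V :=
  {u | G.Reachable v u ∧ G.dist v u ≤ r}

/-- `G` can be burned in `M` rounds: its vertices can be covered by closed balls
of radii `M-1, M-2, ..., 0` around some vertices. -/
def SimpleGraph.burnsIn {V : Type*} (G : SimpleGraph V) (M : ℕ) : Prop :=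
  ∃ f : Fin M → V, ∀ u : V, ∃ i : Fin M, u ∈ G.nball (f i) (M - 1 - (i : ℕ))

/-- The burning number of `G`. -/
noncomputable def SimpleGraph.burningNumber {V : Type*} (G : SimpleGraph V) : ℕ :=
  sInf {M | G.burnsIn M}

/-!
A ball of radius `r` in the path `P_n` contains at most `2r + 1` vertices, so `M` rounds burn
at most `1 + 3 + ⋯ + (2M - 1) = M²` vertices, which forces `n ≤ M²`. Conversely, if `n ≤ M²`
the intervals `[r², (r + 1)²)`, `r < M`, cover `P_n`, and the interval `[r², (r + 1)²)` is the
ball of radius `r` around `r² + r`.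
-/

open Finset

theorem Finset.sum_range_two_mul_add_one (M : ℕ) : ∑ i ∈ range M, (2 * i + 1) = M * M := by
  induction M with
  | zero => rfl
  | succ M ih => rw [sum_range_succ, ih]; ring

theorem Nat.ceil_real_sqrt_le_iff {n M : ℕ} : ⌈√(n : ℝ)⌉₊ ≤ M ↔ n ≤ M * M := by
  rw [Nat.ceil_le, Real.sqrt_le_left M.cast_nonneg, ← Nat.cast_pow, Nat.cast_le, sq]

namespace SimpleGraph

variable {V : Type*} {G : SimpleGraph V}

theorem Walk.natDist_le_length {f : V → ℕ} (hf : ∀ ⦃a b⦄, G.Adj a b → Nat.dist (f a) (f b) ≤ 1)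
    {u v : V} (w : G.Walk u v) : Nat.dist (f u) (f v) ≤ w.length := by
  induction w with
  | nil => simp [Nat.dist_self]
  | @cons a b c hab w ih =>
    rw [Walk.length_cons]
    linarith [Nat.dist.triangle_inequality (f a) (f b) (f c), hf hab]

theorem natCard_le_sum_of_burnsIn [Finite V] {g : ℕ → ℕ} (hg : ∀ v r, (G.nball v r).ncard ≤ g r)
    {M : ℕ} (h : G.burnsIn M) : Nat.card V ≤ ∑ r ∈ range M, g r := by
  obtain ⟨f, hf⟩ := h
  have hcover : (⋃ i, G.nball (f i) (M - 1 - i)) = Set.univ :=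
    Set.eq_univ_of_forall fun u => Set.mem_iUnion.2 (hf u)
  calc Nat.card V = (⋃ i, G.nball (f i) (M - 1 - i)).ncard := by rw [hcover, Set.ncard_univ]
    _ ≤ ∑ i, (G.nball (f i) (M - 1 - i)).ncard := Set.ncard_iUnion_le_of_fintype _
    _ ≤ ∑ i : Fin M, g (M - 1 - i) := sum_le_sum fun i _ => hg _ _
    _ = ∑ r ∈ range M, g r := by
      rw [Fin.sum_univ_eq_sum_range (fun i => g (M - 1 - i)), sum_range_reflect]

variable {n : ℕ}

theorem pathGraph_dist_le_sub {i j : Fin n} (hij : i ≤ j) :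
    (pathGraph n).dist i j ≤ j - i := by
  obtain ⟨k, hk⟩ := Nat.exists_eq_add_of_le (Fin.le_def.1 hij)
  induction k generalizing j with
  | zero => simp [Fin.ext hk.symm]
  | succ k ih =>
    let j' : Fin n := ⟨i + k, by omega⟩
    have hadj : (pathGraph n).Adj j' j := pathGraph_adj.2 (Or.inl (by simp [j', hk]; omega))
    have hij' : (pathGraph n).dist i j' ≤ k := by
      simpa [j'] using ih (j := j') (Fin.le_def.2 (by simp [j'])) rfl
    calc (pathGraph n).dist i j ≤ (pathGraph n).dist i j' + (pathGraph n).dist j' j :=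
          (pathGraph_preconnected n i j').dist_triangle_left j
      _ ≤ j - i := by rw [dist_eq_one_iff_adj.2 hadj]; omega

theorem pathGraph_dist (i j : Fin n) : (pathGraph n).dist i j = Nat.dist i j := by
  refine le_antisymm ?_ ?_
  · rcases le_total i j with hij | hij
    · exact (pathGraph_dist_le_sub hij).trans_eq (Nat.dist_eq_sub_of_le hij).symm
    · rw [dist_comm, Nat.dist_comm]
      exact (pathGraph_dist_le_sub hij).trans_eq (Nat.dist_eq_sub_of_le hij).symm
  · obtain ⟨w, hw⟩ := (pathGraph_preconnected n i j).exists_walk_length_eq_dist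
    refine hw ▸ w.natDist_le_length fun a b hab => ?_
    rcases pathGraph_adj.1 hab with h | h <;> simp [Nat.dist] <;> omega

theorem mem_nball_pathGraph {v u : Fin n} {r : ℕ} :
    u ∈ (pathGraph n).nball v r ↔ Nat.dist v u ≤ r := by
  simp [nball, pathGraph_preconnected n v u, pathGraph_dist]

theorem ncard_nball_pathGraph_le (v : Fin n) (r : ℕ) :
    ((pathGraph n).nball v r).ncard ≤ 2 * r + 1 := by
  calc ((pathGraph n).nball v r).ncard ≤ (Set.Icc (v - r : ℕ) (v + r)).ncard := by
        refine Set.ncard_le_ncard_of_injOn Fin.val (fun u hu => ?_) Fin.val_injective.injOn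
        have := mem_nball_pathGraph.1 hu
        simp only [Nat.dist, Set.mem_Icc] at this ⊢
        omega
    _ ≤ 2 * r + 1 := by rw [Set.ncard_Icc_nat]; omega

theorem le_mul_self_of_burnsIn_pathGraph {M : ℕ} (h : (pathGraph n).burnsIn M) : n ≤ M * M := by
  simpa [sum_range_two_mul_add_one] using
    natCard_le_sum_of_burnsIn ncard_nball_pathGraph_le h

theorem burnsIn_pathGraph_of_le_mul_self (hn : 0 < n) {M : ℕ} (h : n ≤ M * M) :
    (pathGraph n).burnsIn M := by
  -- the source of radius `r` sits at `r² + r`, clamped to the last vertex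
  refine ⟨fun i => ⟨min ((M - 1 - i) * (M - 1 - i) + (M - 1 - i)) (n - 1), by omega⟩,
    fun u => ?_⟩
  set s := Nat.sqrt u
  have hs : s * s ≤ u := Nat.sqrt_le u
  have hs' : u < s * s + 2 * s + 1 := by nlinarith [Nat.lt_succ_sqrt u]
  have hsM : s < M := Nat.sqrt_lt.2 (u.isLt.trans_le h)
  refine ⟨⟨M - 1 - s, by omega⟩, mem_nball_pathGraph.2 ?_⟩
  have hr : M - 1 - (M - 1 - s) = s := by omega
  simp only [hr, Nat.dist]
  omega

theorem burnsIn_pathGraph_iff (hn : 0 < n) {M : ℕ} :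
    (pathGraph n).burnsIn M ↔ n ≤ M * M :=
  ⟨le_mul_self_of_burnsIn_pathGraph, burnsIn_pathGraph_of_le_mul_self hn⟩

end SimpleGraph

/-- The burning number of the path on `n` vertices is `⌈√n⌉`. -/
theorem burningNumber_pathGraph (n : ℕ) :
    (SimpleGraph.pathGraph n).burningNumber = ⌈Real.sqrt n⌉₊ := by
  rcases n.eq_zero_or_pos with rfl | hn
  · have h0 : 0 ∈ {M | (pathGraph 0).burnsIn M} := ⟨finZeroElim, finZeroElim⟩
    simpa [burningNumber] using Nat.sInf_eq_zero.2 (Or.inl h0)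
  · have hset : {M | (pathGraph n).burnsIn M} = Set.Ici ⌈√(n : ℝ)⌉₊ := by
      ext M
      simp only [Set.mem_ofPred_eq, Set.mem_Ici, burnsIn_pathGraph_iff hn, Nat.ceil_real_sqrt_le_iff]
    rw [burningNumber, hset, csInf_Ici]
end

section
/- If G is a path-forest of order n with t ≥ 1 components, then b(G) ≤ ⌊n/(2t)⌋ + t. -/
/-!
In a graph of maximum degree two a longest path inside a component can neither be extended at an
end nor be left through an interior vertex (which already has two neighbours on the path), so it
spans the component. Burning a path-forest with `t` components and `n` vertices in
`M = ⌊n/(2t)⌋ + t` rounds thus amounts to covering `t` disjoint paths by intervals of lengths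
`2M - 1, 2M - 3, …, 1`. Place them greedily, each at the start of a longest remaining path. With
`m` intervals and `t` nonempty paths of total order `s` left, the invariant `t ≤ m`,
`s < 2t(m + 1 - t)` (or `s = 0`) holds initially, as `n < 2t(⌊n/(2t)⌋ + 1)`, and is preserved:
either the longest path is used up, and it had at least the average order, or `t` stays and `s`
drops by `2m - 1 > 2t`.
-/

open SimpleGraph

/-- A path-forest: every connected component is a path, equivalently the graph is
acyclic and every vertex has degree at most `2`. -/
def SimpleGraph.IsPathForest {V : Type*} (G : SimpleGraph V) : Prop :=
  G.IsAcyclic ∧ ∀ v : V, Nat.card (G.neighborSet v) ≤ 2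

open Finset Function

theorem Finset.sum_update_add_eq {ι M : Type*} [Fintype ι] [DecidableEq ι] [AddCommMonoid M]
    (f : ι → M) (k : ι) (b : M) : ∑ i, update f k b i + f k = ∑ i, f i + b := by
  rw [sum_update_of_mem (mem_univ k), sum_eq_add_sum_sdiff_singleton_of_mem (mem_univ k) f]
  abel

theorem Finset.card_update_ne_zero_add {ι : Type*} [Fintype ι] [DecidableEq ι] (a : ι → ℕ)
    (k : ι) (b : ℕ) :
    #{i | update a k b i ≠ 0} + (if a k ≠ 0 then 1 else 0) =
      #{i | a i ≠ 0} + (if b ≠ 0 then 1 else 0) := by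
  simp only [card_filter]
  convert sum_update_add_eq (fun i ↦ if a i ≠ 0 then 1 else 0) k (if b ≠ 0 then 1 else 0)
    using 3
  exact apply_update (fun _ x ↦ if x ≠ 0 then 1 else 0) a k b _

theorem Finset.sum_length_eq_card_of_mem_iff {α ι : Type*} [Finite α] [Fintype ι]
    (f : α → ι) (l : ι → List α) (hnd : ∀ i, (l i).Nodup)
    (hl : ∀ i x, x ∈ l i ↔ f x = i) :
    ∑ i, (l i).length = Nat.card α := by
  classical
  have := Fintype.ofFinite α
  rw [Nat.card_eq_fintype_card, ← card_univ,
    card_eq_sum_card_fiberwise fun x _ ↦ mem_univ (f x)]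
  refine sum_congr rfl fun i _ ↦ ?_
  rw [← List.toFinset_card_of_nodup (hnd i)]
  congr 1
  ext x
  simp [hl]

/-- The greedy invariant for `t` nonempty paths with `s` vertices in total and `M` balls left; for
`t = 0` the truncated `- 1` makes the bound read `s = 0`. -/
def CoverBudget (M t s : ℕ) : Prop :=
  t ≤ M ∧ s ≤ 2 * t * (M + 1 - t) - 1

theorem coverBudget_div_add (n : ℕ) {t : ℕ} (ht : 0 < t) :
    CoverBudget (n / (2 * t) + t) t n := by
  have hdiv := Nat.lt_mul_div_succ n (Nat.mul_pos two_pos ht)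
  generalize n / (2 * t) = q at hdiv ⊢
  refine ⟨by omega, ?_⟩
  rw [show q + t + 1 - t = q + 1 by omega]
  omega

theorem CoverBudget.of_remove_longest {M u s A : ℕ} (h : CoverBudget (M + 1) (u + 1) (s + A))
    (hA : s + A ≤ (u + 1) * A) : CoverBudget M u s := by
  obtain ⟨huM, hs⟩ := h
  obtain ⟨d, rfl⟩ : ∃ d, M = u + d := ⟨M - u, by omega⟩
  rw [show u + d + 1 + 1 - (u + 1) = d + 1 by omega] at hs
  refine ⟨by omega, ?_⟩
  rw [show u + d + 1 - u = d + 1 by omega]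
  rcases Nat.eq_zero_or_pos u with rfl | hu
  · omega
  have hlt : s + A < 2 * (u + 1) * (d + 1) := by
    have : 0 < 2 * (u + 1) * (d + 1) := by positivity
    omega
  have : s * (u + 1) < 2 * u * (d + 1) * (u + 1) := by nlinarith
  have := lt_of_mul_lt_mul_right this
  omega

theorem CoverBudget.of_cut {M t s : ℕ} (h : CoverBudget (M + 1) t (s + (2 * M + 1)))
    (hs : 0 < s) : CoverBudget M t s := by
  obtain ⟨ht, hs'⟩ := h
  have htM : t ≤ M := by
    by_contra h
    rw [show M + 1 + 1 - t = 1 by omega] at hs'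
    omega
  refine ⟨htM, ?_⟩
  have : 2 * t * (M + 1 + 1 - t) = 2 * t * (M + 1 - t) + 2 * t := by
    rw [show M + 1 + 1 - t = (M + 1 - t) + 1 by omega, mul_add_one]
  omega

/-- `t'` and `s'` are the number of nonempty paths and their total order once `2M + 1` vertices are
cut off a longest path, of order `A`. -/
theorem CoverBudget.chop {M t s A t' s' : ℕ} (h : CoverBudget (M + 1) t s)
    (hA0 : A = 0 → t = 0) (hAs : A ≤ s) (hsA : s ≤ t * A)
    (ht' : t' + (if A ≠ 0 then 1 else 0) = t + (if A - (2 * M + 1) ≠ 0 then 1 else 0))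
    (hs' : s' + A = s + (A - (2 * M + 1))) :
    CoverBudget M t' s' := by
  rcases Nat.eq_zero_or_pos A with rfl | hA
  · obtain rfl := hA0 rfl
    simp only [ne_eq, not_true_eq_false, if_false, add_zero, Nat.zero_sub] at ht'
    exact ⟨by omega, by omega⟩
  by_cases hR : A ≤ 2 * M + 1
  · rw [if_pos hA.ne', if_neg (by omega)] at ht'
    obtain ⟨u, rfl⟩ : ∃ u, t = u + 1 := ⟨t - 1, by omega⟩
    obtain rfl : t' = u := by omega
    exact .of_remove_longest (A := A) (by rwa [show s' + A = s by omega]) (by omega)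
  · rw [if_pos hA.ne', if_pos (by omega)] at ht'
    obtain rfl : t' = t := by omega
    exact .of_cut (by rwa [show s' + (2 * M + 1) = s by omega]) (by omega)

section PathCover

variable {ι : Type*}

/-- The balls of radii `M - 1, …, 0` centred at `c 0, …, c (M - 1)` cover the disjoint union of
paths `0, …, a k - 1` (`k : ι`); the centre `(k, p)` is position `p` on path `k`. -/
def CoversPaths (a : ι → ℕ) {M : ℕ} (c : Fin M → ι × ℕ) : Prop :=
  ∀ k, ∀ j < a k, ∃ i : Fin M,
    (c i).1 = k ∧ j ≤ (c i).2 + (M - 1 - i) ∧ (c i).2 ≤ j + (M - 1 - i)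

theorem CoversPaths.cons_chop [DecidableEq ι] {a : ι → ℕ} {M : ℕ} (k : ι)
    {c : Fin M → ι × ℕ} (hc : CoversPaths (update a k (a k - (2 * M + 1))) c) :
    CoversPaths a (Fin.cons (k, M) fun i ↦
      if (c i).1 = k then (k, (c i).2 + (2 * M + 1)) else c i) := by
  intro k' j hj
  by_cases hfirst : k' = k ∧ j ≤ 2 * M
  · exact ⟨0, by simp [hfirst.1], by simp only [Fin.cons_zero, Fin.val_zero]; omega, by simp⟩
  by_cases hk : k' = k
  · subst hk
    have hj' : 2 * M < j := by simpa using hfirst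
    obtain ⟨i, hik, hi⟩ := hc k' (j - (2 * M + 1)) (by rw [update_self]; omega)
    refine ⟨i.succ, by simp [hik], ?_⟩
    simp only [Fin.cons_succ, hik, if_true, Fin.val_succ]
    omega
  · obtain ⟨i, hik, hi⟩ := hc k' j (by simpa [hk] using hj)
    refine ⟨i.succ, by simp [hik, hk], ?_⟩
    simp only [Fin.cons_succ, hik, if_neg hk, Fin.val_succ]
    omega

theorem exists_coversPaths [Fintype ι] [Nonempty ι] (M : ℕ) (a : ι → ℕ)
    (h : CoverBudget M #{k | a k ≠ 0} (∑ k, a k)) :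
    ∃ c : Fin M → ι × ℕ, CoversPaths a c := by
  classical
  induction M generalizing a with
  | zero =>
    refine ⟨finZeroElim, fun k j hj ↦ absurd hj ?_⟩
    have : a k = 0 := by
      simpa using filter_eq_empty_iff.mp (card_eq_zero.mp (Nat.le_zero.mp h.1)) (mem_univ k)
    omega
  | succ M ih =>
    obtain ⟨k, hk⟩ := Finite.exists_max a
    have hA0 : a k = 0 → #{k | a k ≠ 0} = 0 := fun h0 ↦
      card_eq_zero.mpr (filter_eq_empty_iff.mpr fun i _ ↦ by have := hk i; omega)
    have hAs : a k ≤ ∑ i, a i := single_le_sum (fun _ _ ↦ Nat.zero_le _) (mem_univ k)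
    have hsA : ∑ i, a i ≤ #{k | a k ≠ 0} * a k := by
      rw [← sum_filter_ne_zero]
      exact sum_le_card_nsmul _ _ _ fun i _ ↦ hk i
    obtain ⟨c, hc⟩ := ih _ (h.chop hA0 hAs hsA
      (card_update_ne_zero_add a k (a k - (2 * M + 1)))
      (sum_update_add_eq a k (a k - (2 * M + 1))))
    exact ⟨_, hc.cons_chop k⟩

end PathCover

namespace SimpleGraph

variable {V : Type*} {G : SimpleGraph V}

namespace Walk

theorem exists_walk_getVert_getVert {u v : V} (p : G.Walk u v) {i j : ℕ} (h : i ≤ j) :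
    ∃ q : G.Walk (p.getVert i) (p.getVert j), q.length ≤ j - i :=
  ⟨((p.drop i).take (j - i)).copy rfl (by rw [drop_getVert, Nat.add_sub_cancel' h]),
    by simp [take_length]⟩

theorem getVert_mem_nball {u v : V} (p : G.Walk u v) {i j r : ℕ} (hj : j ≤ p.length)
    (hji : j ≤ i + r) (hij : i ≤ j + r) : p.getVert j ∈ G.nball (p.getVert i) r := by
  have hclamp : p.getVert i = p.getVert (min i p.length) := by
    rcases le_total i p.length with h | h
    · rw [min_eq_left h]
    · rw [min_eq_right h, getVert_of_length_le p h, getVert_length]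
  rw [hclamp]
  rcases le_total (min i p.length) j with h | h
  · obtain ⟨q, hq⟩ := p.exists_walk_getVert_getVert h
    exact ⟨q.reachable, (dist_le q).trans (by omega)⟩
  · obtain ⟨q, hq⟩ := p.exists_walk_getVert_getVert h
    exact ⟨q.reverse.reachable, (dist_le q.reverse).trans (by rw [length_reverse]; omega)⟩

theorem IsPath.eq_start_or_eq_end_of_adj_notMem [Finite V]
    (hdeg : ∀ v : V, Nat.card (G.neighborSet v) ≤ 2) {u v : V} {p : G.Walk u v}
    (hp : p.IsPath) {x y : V} (hx : x ∈ p.support) (hy : y ∉ p.support) (hxy : G.Adj x y) :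
    x = u ∨ x = v := by
  by_contra! hend
  obtain ⟨i, rfl, hi⟩ := mem_support_iff_exists_getVert.mp hx
  have hi0 : i ≠ 0 := by rintro rfl; exact hend.1 p.getVert_zero
  have hil : i < p.length := lt_of_le_of_ne hi (by rintro rfl; exact hend.2 p.getVert_length)
  have hsub : insert y (p.toSubgraph.neighborSet (p.getVert i)) ⊆ G.neighborSet (p.getVert i) :=
    Set.insert_subset hxy fun w hw ↦ p.toSubgraph.adj_sub hw
  have hy' : y ∉ p.toSubgraph.neighborSet (p.getVert i) := fun h ↦
    hy (p.mem_verts_toSubgraph.mp (p.toSubgraph.edge_vert h.symm))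
  have := Set.ncard_le_ncard hsub (Set.toFinite _)
  rw [Set.ncard_insert_of_notMem hy', hp.ncard_neighborSet_toSubgraph_internal_eq_two hi0 hil,
    ← Nat.card_coe_set_eq] at this
  have := hdeg (p.getVert i)
  omega

end Walk

theorem exists_isPath_forall_mem_support_iff [Finite V]
    (hdeg : ∀ v : V, Nat.card (G.neighborSet v) ≤ 2) (c : G.ConnectedComponent) :
    ∃ (u v : V) (p : G.Walk u v), p.IsPath ∧
      ∀ w, w ∈ p.support ↔ G.connectedComponentMk w = c := by
  classical
  have := Fintype.ofFinite V
  obtain ⟨u₀, rfl⟩ := c.exists_rep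
  let S : Set ℕ :=
    {n | ∃ (u v : V) (p : G.Walk u v), p.IsPath ∧ G.Reachable u₀ u ∧ p.length = n}
  have hbdd : BddAbove S :=
    ⟨Fintype.card V, by rintro _ ⟨u, v, p, hp, -, rfl⟩; exact hp.length_lt.le⟩
  obtain ⟨u, v, p, hp, hu, hlen⟩ : sSup S ∈ S :=
    Nat.sSup_mem ⟨0, u₀, u₀, .nil, .nil, .refl u₀, rfl⟩ hbdd
  have hmax {u' v' : V} (q : G.Walk u' v') (hq : q.IsPath) (hu' : G.Reachable u₀ u') :
      q.length ≤ p.length :=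
    hlen ▸ le_csSup hbdd ⟨u', v', q, hq, hu', rfl⟩
  refine ⟨u, v, p, hp, fun w ↦ ⟨fun hw ↦ ?_, fun hw ↦ ?_⟩⟩
  · exact ConnectedComponent.sound (hu.trans (p.takeUntil w hw).reachable).symm
  by_contra hw'
  obtain ⟨q⟩ : G.Reachable u w := hu.symm.trans (ConnectedComponent.exact hw).symm
  obtain ⟨d, -, hd, hd'⟩ := q.exists_boundary_dart {x | x ∈ p.support} p.start_mem_support hw'
  rcases hp.eq_start_or_eq_end_of_adj_notMem hdeg hd hd' d.adj with h | h
  · have hadj : G.Adj d.snd u := h ▸ d.adj.symm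
    have := hmax (.cons hadj p) (hp.cons hd') (hu.trans hadj.reachable.symm)
    simp at this
  · have := hmax (p.concat (h ▸ d.adj)) (hp.concat hd' _) hu
    simp at this

theorem burnsIn_of_coversPaths {ι : Type*} {u v : ι → V} (p : ∀ k, G.Walk (u k) (v k))
    (hp : ∀ w, ∃ k, w ∈ (p k).support) {M : ℕ} {c : Fin M → ι × ℕ}
    (hc : CoversPaths (fun k ↦ (p k).length + 1) c) : G.burnsIn M := by
  refine ⟨fun i ↦ (p (c i).1).getVert (c i).2, fun w ↦ ?_⟩
  obtain ⟨k, hk⟩ := hp w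
  obtain ⟨j, rfl, hj⟩ := Walk.mem_support_iff_exists_getVert.mp hk
  obtain ⟨i, rfl, hji, hij⟩ := hc k j (Nat.lt_succ_of_le hj)
  exact ⟨i, (p (c i).1).getVert_mem_nball hj hji hij⟩

end SimpleGraph

/-- If `G` is a path-forest of order `n` with `t ≥ 1` components, then
`b(G) ≤ ⌊n / (2t)⌋ + t`. -/
theorem pathForest_burningNumber_le {V : Type*} [Finite V] [Nonempty V]
    (G : SimpleGraph V) (hG : G.IsPathForest) :
    G.burningNumber ≤
      Nat.card V / (2 * Nat.card G.ConnectedComponent) + Nat.card G.ConnectedComponent := by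
  classical
  have := Fintype.ofFinite G.ConnectedComponent
  choose u v p hp hsupp using exists_isPath_forall_mem_support_iff hG.2
  have hcard : #{k | (p k).length + 1 ≠ 0} = Nat.card G.ConnectedComponent := by
    simp [Nat.card_eq_fintype_card]
  have hsum : ∑ k, ((p k).length + 1) = Nat.card V := by
    simp_rw [← Walk.length_support]
    exact sum_length_eq_card_of_mem_iff _ _ (fun k ↦ (hp k).support_nodup) hsupp
  have hbudget := coverBudget_div_add (Nat.card V) (Nat.card_pos (α := G.ConnectedComponent))
  obtain ⟨c, hc⟩ := exists_coversPaths _ (fun k ↦ (p k).length + 1) (by rwa [hcard, hsum])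
  exact Nat.sInf_le (burnsIn_of_coversPaths p (fun w ↦ ⟨_, (hsupp _ w).2 rfl⟩) hc)
end

section
/- If G is a path-forest of order n with t components where t ≤ ⌈√n⌉, then b(G) ≤ ⌈√n + (t-1)/2⌉. -/
/-!
Radii `0, …, M - 1` give balls covering `2r + 1` consecutive vertices of a path, `M ^ 2` vertices
in all. Each component of a graph of maximum degree two has a Hamiltonian path, so it suffices to
hand the components disjoint sets of radii whose odd numbers `2r + 1` sum to at least the
component sizes. Serving the components one by one, each takes the largest free radii while they
fit and then the smallest free radius that finishes it; the overshoot is bounded by the number of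
radii used so far below the top, which grows by one per component, so `t` components waste at most
`(t - 1) ^ 2`. Finally `n + (t - 1) ^ 2 ≤ ⌈√n + (t - 1) / 2⌉ ^ 2` as long as `t - 1 < √n`.
-/

open SimpleGraph

open Finset Function

lemma add_sub_one_sq_le_ceil_sq (n t : ℕ) (ht₀ : 1 ≤ t) (ht : t ≤ ⌈√(n : ℝ)⌉₊) :
    n + (t - 1) ^ 2 ≤ ⌈√(n : ℝ) + ((t : ℝ) - 1) / 2⌉₊ ^ 2 := by
  set x := √(n : ℝ)
  set s : ℝ := (t : ℝ) - 1
  have hs₀ : 0 ≤ s := by simp only [s]; linarith [(Nat.one_le_cast (α := ℝ)).mpr ht₀]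
  have hsx : s ≤ x := by
    have := Nat.ceil_lt_add_one (Real.sqrt_nonneg (n : ℝ))
    have : (t : ℝ) ≤ ⌈x⌉₊ := by exact_mod_cast ht
    simp only [s]; linarith
  have hM : x + s / 2 ≤ ⌈x + s / 2⌉₊ := Nat.le_ceil _
  have hx : x ^ 2 = n := Real.sq_sqrt (Nat.cast_nonneg n)
  have : (n : ℝ) + s ^ 2 ≤ (⌈x + s / 2⌉₊ : ℝ) ^ 2 := by
    nlinarith [Real.sqrt_nonneg (n : ℝ), mul_le_mul_of_nonneg_left hsx hs₀]
  have hcast : ((t - 1 : ℕ) : ℝ) = s := by simp only [s]; push_cast [Nat.cast_sub ht₀]; ring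
  have hR : ((n + (t - 1) ^ 2 : ℕ) : ℝ) ≤ ((⌈x + s / 2⌉₊ ^ 2 : ℕ) : ℝ) := by
    push_cast [hcast]; exact this
  exact_mod_cast hR

def coverLength (A : Finset ℕ) : ℕ := ∑ r ∈ A, (2 * r + 1)

@[simp] lemma coverLength_empty : coverLength ∅ = 0 := rfl

lemma coverLength_insert {r : ℕ} {A : Finset ℕ} (h : r ∉ A) :
    coverLength (insert r A) = 2 * r + 1 + coverLength A :=
  sum_insert h

lemma coverLength_singleton (r : ℕ) : coverLength {r} = 2 * r + 1 := sum_singleton _ _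

lemma coverLength_range (M : ℕ) : coverLength (range M) = M ^ 2 := by
  induction M with
  | zero => rfl
  | succ m ih => rw [range_add_one, coverLength_insert (by simp), ih]; ring

lemma coverLength_sdiff_add {A B : Finset ℕ} (h : A ⊆ B) :
    coverLength (B \ A) + coverLength A = coverLength B :=
  sum_sdiff h

lemma exists_mem_sdiff_range_le {T m ρ : ℕ} {F : Finset ℕ} (hm : m ∈ range T \ F) (hρ : ρ ≤ m) :
    ∃ r ∈ range T \ F, ρ ≤ r ∧ r ≤ ρ + #F := by
  set C := (range T \ F).filter (ρ ≤ ·)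
  have hC : C.Nonempty := ⟨m, mem_filter.mpr ⟨hm, hρ⟩⟩
  obtain ⟨hrP, hρr⟩ := mem_filter.mp (C.min'_mem hC)
  refine ⟨C.min' hC, hrP, hρr, ?_⟩
  have hgap : Ico ρ (C.min' hC) ⊆ F := by
    intro p hp
    obtain ⟨hρp, hpr⟩ := mem_Ico.mp hp
    by_contra hpF
    have hpC : p ∈ C := mem_filter.mpr
      ⟨mem_sdiff.mpr ⟨mem_range.mpr (hpr.trans (mem_range.mp (mem_sdiff.mp hrP).1)), hpF⟩, hρp⟩
    exact absurd (C.min'_le p hpC) (not_le.mpr hpr)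
  have := card_le_card hgap
  rw [Nat.card_Ico] at this
  omega

lemma erase_max'_range_sdiff {T : ℕ} {F : Finset ℕ} (h : (range T \ F).Nonempty) :
    (range T \ F).erase ((range T \ F).max' h) = range ((range T \ F).max' h) \ F := by
  have hmT := mem_range.mp (mem_sdiff.mp ((range T \ F).max'_mem h)).1
  ext x
  simp only [mem_erase, mem_sdiff, mem_range]
  constructor
  · rintro ⟨hxm, hxT, hxF⟩
    exact ⟨lt_of_le_of_ne ((range T \ F).le_max' x (by simp [hxT, hxF])) hxm, hxF⟩
  · rintro ⟨hxm, hxF⟩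
    exact ⟨hxm.ne, hxm.trans hmT, hxF⟩

lemma exists_subset_le_coverLength (T : ℕ) (F : Finset ℕ) (d : ℕ)
    (h : d + 2 * #F + 1 ≤ coverLength (range T \ F)) :
    ∃ A ⊆ range T \ F, d ≤ coverLength A ∧ coverLength A ≤ d + 2 * #F + 1 ∧
      ∃ T' F', (range T \ F) \ A = range T' \ F' ∧ #F' ≤ #F + 1 := by
  induction T using Nat.strong_induction_on generalizing d with
  | _ T ih =>
  have hP : (range T \ F).Nonempty := by
    by_contra hP
    rw [not_nonempty_iff_eq_empty.mp hP] at h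
    simp at h
  set m := (range T \ F).max' hP
  have hmP : m ∈ range T \ F := max'_mem _ hP
  by_cases hmd : 2 * m + 1 ≤ d
  · have hrest := coverLength_sdiff_add (singleton_subset_iff.mpr hmP)
    rw [sdiff_singleton_eq_erase, erase_max'_range_sdiff hP, coverLength_singleton] at hrest
    change coverLength (range m \ F) + _ = _ at hrest
    obtain ⟨A, hA, hdA, hAd, T', F', hrest', hF'⟩ :=
      ih m (mem_range.mp (mem_sdiff.mp hmP).1) (d - (2 * m + 1)) (by omega)
    have hmA : m ∉ A := fun hm => by simpa using (mem_sdiff.mp (hA hm)).1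
    refine ⟨insert m A, insert_subset hmP (hA.trans ?_), ?_, ?_, T', F', ?_, hF'⟩
    · rw [← erase_max'_range_sdiff hP]; exact erase_subset _ _
    · rw [coverLength_insert hmA]; omega
    · rw [coverLength_insert hmA]; omega
    · rw [← hrest', ← erase_max'_range_sdiff hP]
      ext x; simp only [mem_sdiff, mem_insert, mem_erase]; tauto
  · obtain ⟨r, hrP, hdr, hrd⟩ := exists_mem_sdiff_range_le hmP (show d / 2 ≤ m by omega)
    refine ⟨{r}, singleton_subset_iff.mpr hrP, ?_, ?_, T, insert r F, ?_, card_insert_le _ _⟩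
    · rw [coverLength_singleton]; omega
    · rw [coverLength_singleton]; omega
    · ext x; simp only [mem_sdiff, mem_insert, mem_singleton]; tauto

-- Serving a demand adds at most one hole to `F`, so the `k = #s - 1` demands served before the
-- last one overshoot by at most `∑ i < k, (2 * (#F + i) + 1) = 2 * #F * k + k ^ 2`.
lemma exists_pairwiseDisjoint_le_coverLength {ι : Type*} (d : ι → ℕ) (s : Finset ι) (T : ℕ)
    (F : Finset ℕ)
    (h : ∑ i ∈ s, d i + 2 * #F * (#s - 1) + (#s - 1) ^ 2 ≤ coverLength (range T \ F)) :
    ∃ A : ι → Finset ℕ, (∀ i ∈ s, A i ⊆ range T \ F ∧ d i ≤ coverLength (A i)) ∧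
      (s : Set ι).PairwiseDisjoint A := by
  classical
  induction s using Finset.induction_on generalizing T F with
  | empty => exact ⟨fun _ => ∅, by simp, by simp⟩
  | @insert j s hj ih =>
  rw [sum_insert hj, card_insert_of_notMem hj, Nat.add_sub_cancel] at h
  obtain rfl | hs := s.eq_empty_or_nonempty
  · exact ⟨fun _ => range T \ F, by simpa using by omega, by simp⟩
  obtain ⟨k, hk⟩ : ∃ k, #s = k + 1 := ⟨#s - 1, by have := hs.card_pos; omega⟩
  rw [hk] at h
  obtain ⟨A₀, hA₀, hdA₀, hA₀d, T', F', hrest, hF'⟩ :=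
    exists_subset_le_coverLength T F (d j)
      (by nlinarith [Nat.zero_le (#F * k), Nat.zero_le (∑ i ∈ s, d i)])
  have hcov := coverLength_sdiff_add hA₀
  rw [hrest] at hcov
  obtain ⟨A, hA, hAdisj⟩ := ih T' F' (by
    rw [hk, Nat.add_sub_cancel]
    nlinarith [Nat.mul_le_mul_right k hF', Nat.zero_le (∑ i ∈ s, d i)])
  have hA' : ∀ i ∈ s, A i ⊆ (range T \ F) \ A₀ := fun i hi => hrest ▸ (hA i hi).1
  have hupd : ∀ i ∈ s, update A j A₀ i = A i :=
    fun i hi => update_of_ne (ne_of_mem_of_not_mem hi hj) _ _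
  refine ⟨update A j A₀, ?_, ?_⟩
  · intro i hi
    rcases mem_insert.mp hi with rfl | hi
    · simpa using ⟨hA₀, hdA₀⟩
    · rw [hupd i hi]
      exact ⟨(hA' i hi).trans sdiff_subset, (hA i hi).2⟩
  · rw [coe_insert, Set.pairwiseDisjoint_insert]
    refine ⟨fun i hi i' hi' hii' => ?_, fun i hi _ => ?_⟩
    · simpa only [onFun, hupd i hi, hupd i' hi'] using hAdisj hi hi' hii'
    · rw [update_self, hupd i hi]
      exact disjoint_of_subset_right (hA' i hi) disjoint_sdiff

lemma exists_eq_of_pairwise_disjoint {ι α β : Type*} [Nonempty β] {A : ι → Set α}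
    (hA : Pairwise (Disjoint on A)) (c : ι → α → β) :
    ∃ g : α → β, ∀ i, ∀ a ∈ A i, g a = c i a := by
  classical
  refine ⟨fun a => if h : ∃ i, a ∈ A i then c h.choose a else Classical.arbitrary β,
    fun i a ha => ?_⟩
  have h : ∃ i, a ∈ A i := ⟨i, ha⟩
  simp only [dif_pos h]
  rw [hA.eq (Set.not_disjoint_iff.mpr ⟨a, h.choose_spec, ha⟩)]

namespace SimpleGraph

variable {V : Type*} {G : SimpleGraph V}

lemma exists_walk_getElem_of_isChain {l : List V} (hl : l.IsChain G.Adj) {i j : ℕ} (hij : i ≤ j)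
    (hj : j < l.length) : ∃ p : G.Walk l[i] l[j], p.length = j - i := by
  induction j, hij using Nat.le_induction with
  | base => exact ⟨.nil, by simp⟩
  | succ j hij ih =>
    obtain ⟨p, hp⟩ := ih (by omega)
    have hadj : G.Adj l[j] l[j + 1] := List.isChain_iff_getElem.mp hl j hj
    exact ⟨p.concat hadj, by rw [Walk.length_concat]; omega⟩

lemma mem_nball_of_walk {u v : V} {r : ℕ} (p : G.Walk v u) (hp : p.length ≤ r) :
    u ∈ G.nball v r :=
  ⟨p.reachable, (dist_le p).trans hp⟩

lemma exists_nball_of_isChain [Nonempty V] {l : List V} (hl : l.IsChain G.Adj) {r : ℕ}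
    (hlen : l.length ≤ 2 * r + 1) : ∃ v, ∀ u ∈ l, u ∈ G.nball v r := by
  obtain rfl | hne := eq_or_ne l []
  · exact ⟨Classical.arbitrary V, by simp⟩
  have hmid : l.length / 2 < l.length := Nat.div_lt_self (List.length_pos_iff.mpr hne) one_lt_two
  refine ⟨l[l.length / 2], fun u hu => ?_⟩
  obtain ⟨i, hi, rfl⟩ := List.mem_iff_getElem.mp hu
  rcases le_total i (l.length / 2) with h | h
  · obtain ⟨p, hp⟩ := exists_walk_getElem_of_isChain hl h hmid
    exact mem_nball_of_walk p.reverse (by rw [Walk.length_reverse]; omega)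
  · obtain ⟨p, hp⟩ := exists_walk_getElem_of_isChain hl h hi
    exact mem_nball_of_walk p (by omega)

lemma exists_centers_of_isChain [Nonempty V] {l : List V} (hl : l.IsChain G.Adj)
    (A : Finset ℕ) (hA : l.length ≤ coverLength A) :
    ∃ c : ℕ → V, ∀ u ∈ l, ∃ r ∈ A, u ∈ G.nball (c r) r := by
  classical
  induction A using Finset.induction_on generalizing l with
  | empty => exact ⟨fun _ => Classical.arbitrary V, by simp_all⟩
  | @insert r A hr ih =>
  rw [coverLength_insert hr] at hA
  obtain ⟨c, hc⟩ := ih (hl.drop (2 * r + 1)) (by simp only [List.length_drop]; omega)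
  obtain ⟨v, hv⟩ := exists_nball_of_isChain (hl.take (2 * r + 1)) (List.length_take_le _ _)
  refine ⟨update c r v, fun u hu => ?_⟩
  rw [← List.take_append_drop (2 * r + 1) l, List.mem_append] at hu
  rcases hu with hu | hu
  · exact ⟨r, mem_insert_self _ _, by simpa using hv u hu⟩
  · obtain ⟨r', hr', hu⟩ := hc u hu
    refine ⟨r', mem_insert_of_mem hr', ?_⟩
    rwa [update_of_ne (ne_of_mem_of_not_mem hr' hr)]

lemma burnsIn_of_centers {M : ℕ} (c : ℕ → V) (h : ∀ u, ∃ r < M, u ∈ G.nball (c r) r) :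
    G.burnsIn M := by
  refine ⟨fun i => c (M - 1 - i), fun u => ?_⟩
  obtain ⟨r, hr, hu⟩ := h u
  refine ⟨⟨M - 1 - r, by omega⟩, ?_⟩
  simpa [show M - 1 - (M - 1 - r) = r by omega] using hu

lemma eq_or_eq_of_card_neighborSet_le_two [Finite V] {v a b c : V}
    (hv : Nat.card (G.neighborSet v) ≤ 2) (ha : G.Adj v a) (hb : G.Adj v b) (hc : G.Adj v c)
    (hab : a ≠ b) : c = a ∨ c = b := by
  by_contra! h
  have hsub : ({a, b, c} : Set V) ⊆ G.neighborSet v := by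
    simp [Set.insert_subset_iff, ha, hb, hc]
  have := Set.ncard_le_ncard hsub (Set.toFinite _)
  rw [Set.ncard_eq_three.mpr ⟨a, b, c, hab, h.1.symm, h.2.symm, rfl⟩,
    ← Nat.card_coe_set_eq] at this
  omega

lemma Reachable.mem_of_forall_adj {S : Set V} (hS : ∀ x ∈ S, ∀ y, G.Adj x y → y ∈ S) {u w : V}
    (h : G.Reachable u w) (hu : u ∈ S) : w ∈ S := by
  obtain ⟨p⟩ := h
  induction p with
  | nil => exact hu
  | cons hadj _ ih => exact ih (hS _ hu _ hadj)

lemma reachable_of_mem_of_isChain {l : List V} (hl : l.IsChain G.Adj) {u w : V} (hu : u ∈ l)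
    (hw : w ∈ l) : G.Reachable u w := by
  obtain ⟨i, hi, rfl⟩ := List.mem_iff_getElem.mp hu
  obtain ⟨j, hj, rfl⟩ := List.mem_iff_getElem.mp hw
  rcases le_total i j with h | h
  · exact (exists_walk_getElem_of_isChain hl h hj).elim fun p _ => p.reachable
  · exact (exists_walk_getElem_of_isChain hl h hi).elim fun p _ => p.reachable.symm

lemma exists_list_mem_iff_reachable [Finite V] (hdeg : ∀ v, Nat.card (G.neighborSet v) ≤ 2)
    (v : V) : ∃ l : List V, l.Nodup ∧ l.IsChain G.Adj ∧ ∀ u, u ∈ l ↔ G.Reachable v u := by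
  classical
  cases nonempty_fintype V
  set S : Set (List V) := {l | l.Nodup ∧ l.IsChain G.Adj ∧ v ∈ l}
  have hfin : S.Finite := (List.finite_length_le V (Fintype.card V)).subset
    fun l hl => hl.1.length_le_card
  obtain ⟨l, ⟨hnd, hch, hvl⟩, hmax⟩ := hfin.exists_maximalFor List.length S ⟨[v], by simp [S]⟩
  have hlong : ∀ l' ∈ S, l'.length ≤ l.length := fun l' hl' =>
    (le_total l.length l'.length).elim (hmax hl') id
  have hne : l ≠ [] := List.ne_nil_of_mem hvl
  have hclosed : ∀ x ∈ l, ∀ w, G.Adj x w → w ∈ l := by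
    intro x hx w hxw
    by_contra hw
    obtain ⟨i, hi, rfl⟩ := List.mem_iff_getElem.mp hx
    by_cases hi0 : i = 0
    · subst hi0
      have hcons : (w :: l).IsChain G.Adj :=
        hch.cons_of_ne_nil hne (by rw [List.head_eq_getElem]; exact hxw.symm)
      have := hlong _ ⟨List.nodup_cons.mpr ⟨hw, hnd⟩, hcons, List.mem_cons_of_mem _ hvl⟩
      simp at this
    by_cases hlast : i + 1 = l.length
    · have happ : (l ++ [w]).IsChain G.Adj := hch.append (List.isChain_singleton w) (by
        intro x hx y hy
        rw [List.getLast?_eq_getElem?, show l.length - 1 = i by omega, List.getElem?_eq_getElem hi]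
          at hx
        simp_all)
      have := hlong _ ⟨hnd.append (List.nodup_singleton w) (by simpa using hw), happ,
        List.mem_append_left _ hvl⟩
      simp at this
    have hprev : G.Adj l[i] l[i - 1] := by
      have := List.isChain_iff_getElem.mp hch (i - 1) (by omega)
      simp only [show i - 1 + 1 = i by omega] at this
      exact this.symm
    have hnext : G.Adj l[i] l[i + 1] := List.isChain_iff_getElem.mp hch i (by omega)
    have hdistinct : l[i - 1] ≠ l[i + 1] := by rw [Ne, hnd.getElem_inj_iff]; omega
    rcases eq_or_eq_of_card_neighborSet_le_two (hdeg _) hprev hnext hxw hdistinct with h | h <;>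
      exact hw (h ▸ List.getElem_mem _)
  exact ⟨l, hnd, hch, fun u => ⟨fun hu => reachable_of_mem_of_isChain hch hvl hu,
    fun h => h.mem_of_forall_adj hclosed hvl⟩⟩

theorem burnsIn_of_card_add_sq_le [Finite V] [Nonempty V]
    (hdeg : ∀ v, Nat.card (G.neighborSet v) ≤ 2) {M : ℕ}
    (h : Nat.card V + (Nat.card G.ConnectedComponent - 1) ^ 2 ≤ M ^ 2) : G.burnsIn M := by
  classical
  cases nonempty_fintype V
  choose v hv using fun c : G.ConnectedComponent => Quot.exists_rep c
  choose L hLnd hLch hLmem using fun c => exists_list_mem_iff_reachable hdeg (v c)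
  have hmem : ∀ c u, u ∈ L c ↔ G.connectedComponentMk u = c := fun c u => by
    rw [hLmem, ← ConnectedComponent.eq, show G.connectedComponentMk (v c) = c from hv c, eq_comm]
  have hsum : ∑ c, (L c).length = Nat.card V := by
    rw [Nat.card_eq_fintype_card, ← card_univ,
      card_eq_sum_card_fiberwise (f := G.connectedComponentMk) fun _ _ => mem_univ _]
    refine sum_congr rfl fun c _ => ?_
    rw [← List.toFinset_card_of_nodup (hLnd c)]
    congr 1
    ext u
    simp [hmem]
  obtain ⟨A, hA, hdisj⟩ := exists_pairwiseDisjoint_le_coverLength (fun c => (L c).length) univ M ∅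
    (by simpa [coverLength_range, hsum, Nat.card_eq_fintype_card] using h)
  choose cen hcen using fun c => exists_centers_of_isChain (hLch c) (A c) (hA c (mem_univ c)).2
  obtain ⟨g, hg⟩ := exists_eq_of_pairwise_disjoint (A := fun c => (A c : Set ℕ))
    (fun c c' hcc' => disjoint_coe.mpr (hdisj (mem_univ c) (mem_univ c') hcc')) cen
  refine burnsIn_of_centers g fun u => ?_
  obtain ⟨r, hr, hu⟩ := hcen _ u ((hmem _ u).mpr rfl)
  exact ⟨r, by simpa using (hA _ (mem_univ _)).1 hr, by rwa [hg _ r hr]⟩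

end SimpleGraph

/-- If `G` is a path-forest of order `n` with `t ≤ ⌈√n⌉` components, then
`b(G) ≤ ⌈√n + (t - 1)/2⌉`. -/
theorem pathForest_burningNumber_le' {V : Type*} [Finite V]
    (G : SimpleGraph V) (hG : G.IsPathForest)
    (ht : Nat.card G.ConnectedComponent ≤ ⌈Real.sqrt (Nat.card V)⌉₊) :
    G.burningNumber ≤
      ⌈Real.sqrt (Nat.card V) + ((Nat.card G.ConnectedComponent : ℝ) - 1) / 2⌉₊ := by
  rcases isEmpty_or_nonempty V with hV | hV
  · exact (Nat.sInf_le (show G.burnsIn 0 from ⟨Fin.elim0, isEmptyElim⟩)).trans (Nat.zero_le _)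
  have ht₀ : 1 ≤ Nat.card G.ConnectedComponent :=
    have : Nonempty G.ConnectedComponent := ⟨G.connectedComponentMk (Classical.arbitrary V)⟩
    Nat.card_pos
  exact Nat.sInf_le (burnsIn_of_card_add_sq_le hG.2 (add_sub_one_sq_le_ceil_sq _ _ ht₀ ht))
end

section
/- Let 𝒢 be a family of connected graphs and 𝒢̂ ⊆ 𝒢 such that for every G ∈ 𝒢̂ of order n, there exist a vertex v and an integer r ≤ ⌈√n⌉ - 1 such that either N_r[v] = V(G), or both (1) |N_r[v]| ≥ 2⌈√n⌉ - 1 and (2) the subgraph induced on V(G) \ N_r[v] is connected and belongs to 𝒢. If b(G) ≤ ⌈√|V(G)|⌉ for all G ∈ 𝒢 \ 𝒢̂, then b(G) ≤ ⌈√|V(G)|⌉ for all G ∈ 𝒢. -/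
open SimpleGraph

lemma nball_self {V : Type*} (G : SimpleGraph V) (v : V) (r : ℕ) : v ∈ G.nball v r :=
  ⟨Reachable.refl v, by simp [SimpleGraph.dist_self]⟩

lemma nball_mono {V : Type*} (G : SimpleGraph V) (v : V) {r s : ℕ} (h : r ≤ s) :
    G.nball v r ⊆ G.nball v s := fun _ hu => ⟨hu.1, hu.2.trans h⟩

lemma burnsIn_card {V : Type*} [Finite V] [Nonempty V] (G : SimpleGraph V) :
    G.burnsIn (Nat.card V) := by
  refine ⟨fun i => (Finite.equivFin V).symm i, fun u => ⟨Finite.equivFin V u, ?_⟩⟩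
  simp only [Equiv.symm_apply_apply]
  exact nball_self G u _

lemma induce_transfer {V : Type*} (G : SimpleGraph V) (S : Set V) (a b : S)
    (h : (G.induce S).Reachable a b) :
    G.Reachable ↑a ↑b ∧ G.dist ↑a ↑b ≤ (G.induce S).dist a b := by
  obtain ⟨p, hp⟩ := h.exists_walk_length_eq_edist
  have hlen : p.length = (G.induce S).dist a b := by
    rw [SimpleGraph.dist, ← hp]; simp
  let q := p.map (SimpleGraph.Embedding.induce S).toHom
  refine ⟨⟨q⟩, ?_⟩
  calc G.dist ↑a ↑b ≤ q.length := SimpleGraph.dist_le q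
    _ = p.length := SimpleGraph.Walk.length_map _ _
    _ = _ := hlen

/-- Meta-lemma: let `𝒢` be a family of connected graphs and `𝒢hat ⊆ 𝒢` such that
every `G ∈ 𝒢hat` of order `n` has a closed ball `N_r[v]` with `r ≤ ⌈√n⌉ - 1` which
either covers `G`, or has order at least `2⌈√n⌉ - 1` and whose complement induces a
connected graph in `𝒢`.  If `b(G) ≤ ⌈√|V(G)|⌉` for all `G ∈ 𝒢 \ 𝒢hat`, then
`b(G) ≤ ⌈√|V(G)|⌉` for all `G ∈ 𝒢`. -/
theorem burning_meta_lemma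
    (𝒢 𝒢hat : ∀ (V : Type) [Finite V], SimpleGraph V → Prop)
    (hsub : ∀ (V : Type) [Finite V] (G : SimpleGraph V), 𝒢hat V G → 𝒢 V G)
    (hconn : ∀ (V : Type) [Finite V] (G : SimpleGraph V), 𝒢 V G → G.Connected)
    (hhat : ∀ (V : Type) [Finite V] (G : SimpleGraph V), 𝒢hat V G →
      ∃ (v : V) (r : ℕ), r ≤ ⌈Real.sqrt (Nat.card V)⌉₊ - 1 ∧
        (G.nball v r = Set.univ ∨
          (2 * ⌈Real.sqrt (Nat.card V)⌉₊ - 1 ≤ Nat.card (G.nball v r) ∧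
            (G.induce ((G.nball v r)ᶜ)).Connected ∧
            𝒢 ((G.nball v r)ᶜ : Set V) (G.induce ((G.nball v r)ᶜ)))))
    (hbase : ∀ (V : Type) [Finite V] (G : SimpleGraph V), 𝒢 V G → ¬ 𝒢hat V G →
      G.burningNumber ≤ ⌈Real.sqrt (Nat.card V)⌉₊) :
    ∀ (V : Type) [Finite V] (G : SimpleGraph V), 𝒢 V G →
      G.burningNumber ≤ ⌈Real.sqrt (Nat.card V)⌉₊ := by
  suffices H : ∀ n : ℕ, ∀ (V : Type) [Finite V] (G : SimpleGraph V),
      Nat.card V ≤ n → 𝒢 V G → G.burningNumber ≤ ⌈Real.sqrt (Nat.card V)⌉₊ by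
    intro V _ G hG
    exact H (Nat.card V) V G le_rfl hG
  intro n
  induction n with
  | zero =>
    intro V _ G hcard hG
    have hne : Nonempty V := (hconn V G hG).nonempty
    have := Nat.card_pos (α := V)
    omega
  | succ n ih =>
    intro V _ G hcard hG
    have hne : Nonempty V := (hconn V G hG).nonempty
    have hcardpos : 0 < Nat.card V := Nat.card_pos
    set K := ⌈Real.sqrt (Nat.card V)⌉₊ with hK
    clear_value K
    have hK1 : 1 ≤ K := by
      rw [hK]
      exact Nat.one_le_ceil_iff.mpr (Real.sqrt_pos.mpr (by exact_mod_cast hcardpos))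
    by_cases hhatG : 𝒢hat V G
    · obtain ⟨v, r, hr, hcase⟩ := hhat V G hhatG
      rw [← hK] at hr hcase
      rcases hcase with hcov | ⟨hsize, hconn', hmem⟩
      · have hb : G.burnsIn K := by
          refine ⟨fun _ => v, fun u => ⟨⟨0, hK1⟩, ?_⟩⟩
          have hu : u ∈ G.nball v r := hcov ▸ Set.mem_univ u
          exact nball_mono G v (by simp only [Fin.val_mk, Nat.sub_zero]; omega) hu
        exact Nat.sInf_le hb
      · set S : Set V := (G.nball v r)ᶜ with hS
        set G' : SimpleGraph S := G.induce S with hG'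
        have hSne : Nonempty S := hconn'.nonempty
        have hvS : (v : V) ∉ S := by
          simp only [hS, Set.mem_compl_iff, not_not]
          exact nball_self G v r
        have hcardS : Nat.card S < Nat.card V := by
          rw [Nat.card_coe_set_eq, ← Set.ncard_univ V]
          exact Set.ncard_lt_ncard
            (Set.ssubset_univ_iff.mpr (fun h => hvS (h ▸ Set.mem_univ v)))
            Set.finite_univ
        have hsplit : Nat.card (G.nball v r) + Nat.card S = Nat.card V := by
          rw [Nat.card_coe_set_eq, Nat.card_coe_set_eq]
          exact Set.ncard_add_ncard_compl (G.nball v r) (Set.toFinite _) (Set.toFinite _)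
        have hnK : Nat.card V ≤ K * K := by
          have h1 : Real.sqrt (Nat.card V) ≤ (K : ℝ) := by rw [hK]; exact Nat.le_ceil _
          have h2 : (Nat.card V : ℝ) ≤ (K : ℝ) * K := by
            nlinarith [Real.sq_sqrt (show (0:ℝ) ≤ (Nat.card V : ℝ) by positivity),
              Real.sqrt_nonneg ((Nat.card V : ℝ))]
          exact_mod_cast h2
        have hSsmall : Nat.card S ≤ (K - 1) * (K - 1) := by
          obtain ⟨m, rfl⟩ : ∃ m, K = 1 + m := ⟨K - 1, by omega⟩
          have heq : (1 + m) * (1 + m) = m * m + (2 * (1 + m) - 1) := by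
            rw [show 2 * (1 + m) - 1 = 2 * m + 1 from by omega]; ring
          have : Nat.card S ≤ m * m := by omega
          simpa using this
        have hih := ih S G' (by omega) hmem
        have hceil : ⌈Real.sqrt (Nat.card S)⌉₊ ≤ K - 1 := by
          rw [Nat.ceil_le]
          calc Real.sqrt (Nat.card S) ≤ Real.sqrt (((K-1)*(K-1) : ℕ) : ℝ) :=
                Real.sqrt_le_sqrt (by exact_mod_cast hSsmall)
            _ = ((K - 1 : ℕ) : ℝ) := by
                push_cast
                exact Real.sqrt_mul_self (by positivity)
        have hnem : ({M | G'.burnsIn M}).Nonempty := ⟨Nat.card S, burnsIn_card G'⟩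
        have hMmem : G'.burnsIn G'.burningNumber := Nat.sInf_mem hnem
        set M' := G'.burningNumber with hM'def
        have hM' : M' ≤ K - 1 := le_trans hih hceil
        obtain ⟨f', hf'⟩ := hMmem
        have hb : G.burnsIn K := by
          refine ⟨fun i => if h : K - M' ≤ (i : ℕ) then
              (f' ⟨(i : ℕ) - (K - M'), by have := i.isLt; omega⟩ : S) else v,
            fun u => ?_⟩
          by_cases hu : u ∈ G.nball v r
          · refine ⟨⟨0, by omega⟩, ?_⟩
            beta_reduce
            rw [dif_neg (by simp only [Fin.val_mk]; omega)]
            exact nball_mono G v (by simp only [Fin.val_mk, Nat.sub_zero]; omega) hu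
          · obtain ⟨i, hi⟩ := hf' ⟨u, hu⟩
            obtain ⟨hreach, hdist⟩ := induce_transfer G S (f' i) ⟨u, hu⟩ hi.1
            have hiM := i.isLt
            have hiK : K - M' + (i : ℕ) < K := by omega
            refine ⟨⟨K - M' + (i : ℕ), hiK⟩, ?_⟩
            beta_reduce
            rw [dif_pos (by simp only [Fin.val_mk]; omega)]
            simp only [Fin.val_mk, Nat.add_sub_cancel_left, Fin.eta]
            refine ⟨hreach, ?_⟩
            have hρ : M' - 1 - (i : ℕ) ≤ K - 1 - (K - M' + (i : ℕ)) := by omega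
            exact le_trans (le_trans hdist hi.2) hρ
        exact Nat.sInf_le hb
    · rw [hK]; exact hbase V G hG hhatG
end
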